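/- Assume that for every nonzero direction a ∈ ℝ^d and every coupling collection Π one has r(a) ≥ r(a,Π). Let a^τ ∈ ℝ^d be nonzero, let Π^τ be a coupling collection whose coupling for each pair (k1,k2) ∈ I_B ∪ I_W attains the minimum defining W²(P(Q_{k1},a^τ), P(Q_{k2},a^τ)), and suppose a^{τ+1} maximizes r(·,Π^τ) over nonzero directions. Then r(a^{τ+1}) ≥ r(a^τ): one round of the OTAF update of the couplings and the direction does not decrease Fisher's ratio. -/

import Mathlib

open Finset Matrix

/-- A coupling of two probability vectors `p` and `q`: a nonnegative matrix whose
row sums are `p` and whose column sums are `q`. -/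
def IsCoupling {m₁ m₂ : ℕ} (π : Matrix (Fin m₁) (Fin m₂) ℝ)
    (p : Fin m₁ → ℝ) (q : Fin m₂ → ℝ) : Prop :=
  (∀ i j, 0 ≤ π i j) ∧ (∀ i, ∑ j, π i j = p i) ∧ (∀ j, ∑ i, π i j = q j)

/-- Transport cost of a coupling `π` between the projections onto direction `a` of
two discrete distributions with support points `x₁, x₂`:
`Σ_{i,j} π_{ij} (aᵀ x₁_i − aᵀ x₂_j)²`. -/
def transportCost {d m₁ m₂ : ℕ} (a : Fin d → ℝ)
    (x₁ : Fin m₁ → Fin d → ℝ) (x₂ : Fin m₂ → Fin d → ℝ)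
    (π : Matrix (Fin m₁) (Fin m₂) ℝ) : ℝ :=
  ∑ i, ∑ j, π i j * (a ⬝ᵥ x₁ i - a ⬝ᵥ x₂ j) ^ 2

/-- Squared Wasserstein distance `W²(P(Q_{k1},a), P(Q_{k2},a))` between the
one-dimensional projections onto `a`: the infimum of the transport cost over all
couplings. -/
noncomputable def Wsq {n d : ℕ} (m : Fin n → ℕ)
    (p : (k : Fin n) → Fin (m k) → ℝ) (x : (k : Fin n) → Fin (m k) → Fin d → ℝ)
    (a : Fin d → ℝ) (k₁ k₂ : Fin n) : ℝ :=
  ⨅ π : {π : Matrix (Fin (m k₁)) (Fin (m k₂)) ℝ // IsCoupling π (p k₁) (p k₂)},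
    transportCost a (x k₁) (x k₂) (π : Matrix (Fin (m k₁)) (Fin (m k₂)) ℝ)

/-- Average variation over a set of pairs `I`, computed with a given coupling
collection `Π`. -/
noncomputable def avgVarWith {n d : ℕ} (m : Fin n → ℕ)
    (x : (k : Fin n) → Fin (m k) → Fin d → ℝ)
    (I : Finset (Fin n × Fin n)) (a : Fin d → ℝ)
    (C : (k₁ k₂ : Fin n) → Matrix (Fin (m k₁)) (Fin (m k₂)) ℝ) : ℝ :=
  (1 / (I.card : ℝ)) * ∑ kk ∈ I, transportCost a (x kk.1) (x kk.2) (C kk.1 kk.2)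

/-- Average variation over a set of pairs `I`, computed with optimal couplings
(i.e. with squared Wasserstein distances). -/
noncomputable def avgVar {n d : ℕ} (m : Fin n → ℕ)
    (p : (k : Fin n) → Fin (m k) → ℝ) (x : (k : Fin n) → Fin (m k) → Fin d → ℝ)
    (I : Finset (Fin n × Fin n)) (a : Fin d → ℝ) : ℝ :=
  (1 / (I.card : ℝ)) * ∑ kk ∈ I, Wsq m p x a kk.1 kk.2

/-- A coupling collection: a valid coupling for every pair in `I_B ∪ I_W`. -/
def IsCouplingCollection {n : ℕ} (m : Fin n → ℕ)
    (p : (k : Fin n) → Fin (m k) → ℝ) (IB IW : Finset (Fin n × Fin n))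
    (C : (k₁ k₂ : Fin n) → Matrix (Fin (m k₁)) (Fin (m k₂)) ℝ) : Prop :=
  ∀ kk ∈ IB ∪ IW, IsCoupling (C kk.1 kk.2) (p kk.1) (p kk.2)

/-- Fisher's ratio `r(a,Π)` under a given coupling collection. -/
noncomputable def fisherRatioWith {n d : ℕ} (m : Fin n → ℕ)
    (x : (k : Fin n) → Fin (m k) → Fin d → ℝ)
    (IB IW : Finset (Fin n × Fin n)) (a : Fin d → ℝ)
    (C : (k₁ k₂ : Fin n) → Matrix (Fin (m k₁)) (Fin (m k₂)) ℝ) : ℝ :=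
  avgVarWith m x IB a C / avgVarWith m x IW a C

/-- Fisher's ratio `r(a) = V̄_B(a)/V̄_W(a)` computed with optimal couplings. -/
noncomputable def fisherRatio {n d : ℕ} (m : Fin n → ℕ)
    (p : (k : Fin n) → Fin (m k) → ℝ) (x : (k : Fin n) → Fin (m k) → Fin d → ℝ)
    (IB IW : Finset (Fin n × Fin n)) (a : Fin d → ℝ) : ℝ :=
  avgVar m p x IB a / avgVar m p x IW a

theorem avgVarWith_eq_avgVar_of_optimal {n d : ℕ} {m : Fin n → ℕ}
    {p : (k : Fin n) → Fin (m k) → ℝ} {x : (k : Fin n) → Fin (m k) → Fin d → ℝ}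
    {I : Finset (Fin n × Fin n)} {a : Fin d → ℝ}
    {C : (k₁ k₂ : Fin n) → Matrix (Fin (m k₁)) (Fin (m k₂)) ℝ}
    (hC : ∀ kk ∈ I, transportCost a (x kk.1) (x kk.2) (C kk.1 kk.2) = Wsq m p x a kk.1 kk.2) :
    avgVarWith m x I a C = avgVar m p x I a := by
  rw [avgVarWith, avgVar, Finset.sum_congr rfl hC]

theorem fisherRatioWith_eq_fisherRatio_of_optimal {n d : ℕ} {m : Fin n → ℕ}
    {p : (k : Fin n) → Fin (m k) → ℝ} {x : (k : Fin n) → Fin (m k) → Fin d → ℝ}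
    {IB IW : Finset (Fin n × Fin n)} {a : Fin d → ℝ}
    {C : (k₁ k₂ : Fin n) → Matrix (Fin (m k₁)) (Fin (m k₂)) ℝ}
    (hC : ∀ kk ∈ IB ∪ IW,
      transportCost a (x kk.1) (x kk.2) (C kk.1 kk.2) = Wsq m p x a kk.1 kk.2) :
    fisherRatioWith m x IB IW a C = fisherRatio m p x IB IW a := by
  rw [fisherRatioWith, fisherRatio,
    avgVarWith_eq_avgVar_of_optimal fun kk hkk => hC kk (mem_union_left IW hkk),
    avgVarWith_eq_avgVar_of_optimal fun kk hkk => hC kk (mem_union_right IB hkk)]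

theorem otaf_ascending_general
    {n d : ℕ} (m : Fin n → ℕ)
    (p : (k : Fin n) → Fin (m k) → ℝ)
    (x : (k : Fin n) → Fin (m k) → Fin d → ℝ)
    (IB IW : Finset (Fin n × Fin n))
    -- the standing assumption of the theorem: `r(a) ≥ r(a,Π)`
    (hassume : ∀ (a : Fin d → ℝ), a ≠ 0 →
      ∀ (C : (k₁ k₂ : Fin n) → Matrix (Fin (m k₁)) (Fin (m k₂)) ℝ),
        IsCouplingCollection m p IB IW C →
          fisherRatio m p x IB IW a ≥ fisherRatioWith m x IB IW a C)
    (aτ : Fin d → ℝ) (haτ : aτ ≠ 0)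
    (Cτ : (k₁ k₂ : Fin n) → Matrix (Fin (m k₁)) (Fin (m k₂)) ℝ)
    (hCτ : IsCouplingCollection m p IB IW Cτ)
    -- `Π^τ` attains the minimum defining the squared Wasserstein distances at `a^τ`
    (hCτopt : ∀ kk ∈ IB ∪ IW,
      transportCost aτ (x kk.1) (x kk.2) (Cτ kk.1 kk.2) = Wsq m p x aτ kk.1 kk.2)
    (aτ' : Fin d → ℝ) (haτ' : aτ' ≠ 0)
    -- `a^{τ+1}` maximizes `r(·,Π^τ)` over nonzero directions
    (hmax : ∀ (a : Fin d → ℝ), a ≠ 0 →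
      fisherRatioWith m x IB IW aτ' Cτ ≥ fisherRatioWith m x IB IW a Cτ) :
    fisherRatio m p x IB IW aτ' ≥ fisherRatio m p x IB IW aτ :=
  calc fisherRatio m p x IB IW aτ'
      _ ≥ fisherRatioWith m x IB IW aτ' Cτ := hassume aτ' haτ' Cτ hCτ
      _ ≥ fisherRatioWith m x IB IW aτ Cτ := hmax aτ haτ
      _ = fisherRatio m p x IB IW aτ := fisherRatioWith_eq_fisherRatio_of_optimal hCτopt

/-- **Theorem 1 (OTAF is ascending).** Assume `r(a) ≥ r(a,Π)` for every nonzero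
direction `a` and every coupling collection `Π`. If `Π^τ` consists of optimal
couplings for the projection `a^τ` and `a^{τ+1}` maximizes `r(·,Π^τ)` over
nonzero directions, then `r(a^{τ+1}) ≥ r(a^τ)`. -/
theorem otaf_ascending
    {n d : ℕ} (m : Fin n → ℕ)
    (p : (k : Fin n) → Fin (m k) → ℝ)
    (x : (k : Fin n) → Fin (m k) → Fin d → ℝ)
    (hp : ∀ k j, 0 ≤ p k j) (hpsum : ∀ k, ∑ j, p k j = 1)
    (IB IW : Finset (Fin n × Fin n)) (hIB : IB.Nonempty) (hIW : IW.Nonempty)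
    -- the within-class variation is positive for every nonzero direction and
    -- every coupling collection
    (hVWpos : ∀ (a : Fin d → ℝ), a ≠ 0 →
      ∀ (C : (k₁ k₂ : Fin n) → Matrix (Fin (m k₁)) (Fin (m k₂)) ℝ),
        IsCouplingCollection m p IB IW C → 0 < avgVarWith m x IW a C)
    -- the standing assumption of the theorem: `r(a) ≥ r(a,Π)`
    (hassume : ∀ (a : Fin d → ℝ), a ≠ 0 →
      ∀ (C : (k₁ k₂ : Fin n) → Matrix (Fin (m k₁)) (Fin (m k₂)) ℝ),
        IsCouplingCollection m p IB IW C →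
          fisherRatio m p x IB IW a ≥ fisherRatioWith m x IB IW a C)
    (aτ : Fin d → ℝ) (haτ : aτ ≠ 0)
    (Cτ : (k₁ k₂ : Fin n) → Matrix (Fin (m k₁)) (Fin (m k₂)) ℝ)
    (hCτ : IsCouplingCollection m p IB IW Cτ)
    -- `Π^τ` attains the minimum defining the squared Wasserstein distances at `a^τ`
    (hCτopt : ∀ kk ∈ IB ∪ IW,
      transportCost aτ (x kk.1) (x kk.2) (Cτ kk.1 kk.2) = Wsq m p x aτ kk.1 kk.2)
    (aτ' : Fin d → ℝ) (haτ' : aτ' ≠ 0)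
    -- `a^{τ+1}` maximizes `r(·,Π^τ)` over nonzero directions
    (hmax : ∀ (a : Fin d → ℝ), a ≠ 0 →
      fisherRatioWith m x IB IW aτ' Cτ ≥ fisherRatioWith m x IB IW a Cτ) :
    fisherRatio m p x IB IW aτ' ≥ fisherRatio m p x IB IW aτ :=
  otaf_ascending_general m p x IB IW hassume aτ haτ Cτ hCτ hCτopt aτ' haτ' hmax
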